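/- Let Σ be a strongly symmetric fan of dimension r in ℝ^r, and let A(Σ) be the set of hyperplanes H_1,…,H_n whose union is the support of Σ(r-1). Then Σ equals the set of all intersections of closed chambers of the hyperplane arrangement A(Σ). In particular, Σ is centrally symmetric: Σ = −Σ. -/

import Mathlib

open scoped Classical Pointwise BigOperators

noncomputable section

abbrev Vr (r : ℕ) : Type := Fin r → ℝ

/-- The convex cone generated by a finite set of vectors. -/
def coneGen {M : Type*} [AddCommGroup M] [Module ℝ M] (s : Finset M) : Set M :=
  { x | ∃ c : M → ℝ, (∀ v, 0 ≤ c v) ∧ x = ∑ v ∈ s, c v • v }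

/-- Dimension of the linear span of a set. -/
def spanDim {M : Type*} [AddCommGroup M] [Module ℝ M] (s : Set M) : ℕ :=
  Module.finrank ℝ (Submodule.span ℝ s)

/-- A (linear) hyperplane: the kernel of a nonzero linear functional. -/
def IsHyp {M : Type*} [AddCommGroup M] [Module ℝ M] (H : Set M) : Prop :=
  ∃ f : M →ₗ[ℝ] ℝ, f ≠ 0 ∧ H = {x | f x = 0}

/-- A strongly convex rational polyhedral cone with respect to the lattice `N`. -/
def IsNCone {r : ℕ} (N : AddSubgroup (Vr r)) (σ : Set (Vr r)) : Prop :=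
  ∃ s : Finset (Vr r), ↑s ⊆ (N : Set (Vr r)) ∧ σ = coneGen s ∧ σ ∩ (-σ) ⊆ {0}

/-- `τ` is a face of `σ`. -/
def IsFaceOf {M : Type*} [AddCommGroup M] [Module ℝ M] (τ σ : Set M) : Prop :=
  ∃ m : M →ₗ[ℝ] ℝ, (∀ x ∈ σ, 0 ≤ m x) ∧ τ = σ ∩ {x | m x = 0}

/-- A fan in the lattice `N`. -/
structure IsFan {r : ℕ} (N : AddSubgroup (Vr r)) (F : Set (Set (Vr r))) : Prop where
  finite : F.Finite
  nonempty : F.Nonempty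
  cones : ∀ σ ∈ F, IsNCone N σ
  faces : ∀ σ ∈ F, ∀ τ : Set (Vr r), IsFaceOf τ σ → τ ∈ F
  inter : ∀ σ₁ ∈ F, ∀ σ₂ ∈ F, IsFaceOf (σ₁ ∩ σ₂) σ₁ ∧ IsFaceOf (σ₁ ∩ σ₂) σ₂

/-- Completeness: the support is everything. -/
def FanComplete {M : Type*} (F : Set (Set M)) : Prop := ⋃₀ F = Set.univ

/-- Strong symmetry: complete, and the support of the codimension-one cones is a
finite union of hyperplanes. -/
def SSymm {M : Type*} [AddCommGroup M] [Module ℝ M] (F : Set (Set M)) : Prop :=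
  FanComplete F ∧ ∃ Hs : Finset (Set M), (∀ h ∈ Hs, IsHyp h) ∧
    ⋃₀ {τ ∈ F | spanDim τ = Module.finrank ℝ M - 1} = ⋃₀ ↑Hs

/-- Central symmetry. -/
def CSymm {M : Type*} [AddCommGroup M] (F : Set (Set M)) : Prop := ∀ σ ∈ F, -σ ∈ F

/-- `b` is a ℤ-basis of the subgroup `L` of `ℝ^r`. -/
def IsZBasis {r d : ℕ} (L : AddSubgroup (Vr r)) (b : Fin d → Vr r) : Prop :=
  LinearIndependent ℝ b ∧ AddSubgroup.closure (Set.range b) = L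

/-- A (full-rank) lattice in `ℝ^r`. -/
def IsLattice {r : ℕ} (N : AddSubgroup (Vr r)) : Prop :=
  ∃ b : Fin r → Vr r, IsZBasis N b

/-- A cone generated by a part of a ℤ-basis of `L`. -/
def SmoothCone {r : ℕ} (L : AddSubgroup (Vr r)) (σ : Set (Vr r)) : Prop :=
  ∃ (d : ℕ) (b : Fin d → Vr r) (s : Finset (Fin d)),
    IsZBasis L b ∧ σ = coneGen (s.image b)

/-- Chambers of an arrangement: connected components of the complement. -/
def chambers {r : ℕ} (A : Finset (Set (Vr r))) : Set (Set (Vr r)) :=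
  { K | ∃ x ∈ (⋃₀ (A : Set (Set (Vr r))))ᶜ,
      K = connectedComponentIn (⋃₀ (A : Set (Set (Vr r))))ᶜ x }

/-- An open simplicial cone of full dimension. -/
def IsOpenSimplicialCone {r : ℕ} (K : Set (Vr r)) : Prop :=
  ∃ b : Fin r → Vr r, LinearIndependent ℝ b ∧
    K = { x | ∃ c : Fin r → ℝ, (∀ i, 0 < c i) ∧ x = ∑ i, c i • b i }

def ker0 {r : ℕ} (α : Vr r →ₗ[ℝ] ℝ) : Set (Vr r) := {x | α x = 0}

/-- Walls of a chamber `K`. -/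
def walls {r : ℕ} (A : Finset (Set (Vr r))) (K : Set (Vr r)) : Set (Set (Vr r)) :=
  { H | H ∈ A ∧ spanDim (H ∩ closure K) = r - 1 }

/-- The set `B^K` of inward-pointing normals of the walls of `K`. -/
def BK {r : ℕ} (A : Finset (Set (Vr r))) (R : Finset (Vr r →ₗ[ℝ] ℝ)) (K : Set (Vr r)) :
    Finset (Vr r →ₗ[ℝ] ℝ) :=
  R.filter (fun α => ker0 α ∈ walls A K ∧ K ⊆ {x | 0 ≤ α x})

/-- A crystallographic arrangement `(A, R)`. -/
structure IsCrystArr {r : ℕ} (A : Finset (Set (Vr r))) (R : Finset (Vr r →ₗ[ℝ] ℝ)) : Prop where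
  simplicial : ∀ K ∈ chambers A, IsOpenSimplicialCone K
  hyps : (A : Set (Set (Vr r))) = (fun α => ker0 α) '' (R : Set (Vr r →ₗ[ℝ] ℝ))
  nonzero : ∀ α ∈ R, α ≠ 0
  neg_mem : ∀ α ∈ R, -α ∈ R
  reduced : ∀ α ∈ R, ∀ β ∈ R, (∃ c : ℝ, β = c • α) → β = α ∨ β = -α
  integral : ∀ K ∈ chambers A, ∀ β ∈ R,
    β ∈ Submodule.span ℤ ((BK A R K : Set (Vr r →ₗ[ℝ] ℝ)))

/-- The set of all intersections of closed chambers of `A`. -/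
def closedChamberInts {r : ℕ} (A : Finset (Set (Vr r))) : Set (Set (Vr r)) :=
  { σ | ∃ S : Set (Set (Vr r)), S.Nonempty ∧ S ⊆ chambers A ∧ σ = ⋂₀ (closure '' S) }

/-- The lattice dual to `M_R = ∑_{α ∈ R} ℤ α`. -/
def dualLattice {r : ℕ} (R : Finset (Vr r →ₗ[ℝ] ℝ)) : AddSubgroup (Vr r) where
  carrier := { x | ∀ α ∈ R, ∃ k : ℤ, α x = k }
  zero_mem' := fun α _ => ⟨0, by simp⟩
  add_mem' := by
    intro x y hx hy α hα
    obtain ⟨k, hk⟩ := hx α hα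
    obtain ⟨m, hm⟩ := hy α hα
    exact ⟨k + m, by simp [hk, hm]⟩
  neg_mem' := by
    intro x hx α hα
    obtain ⟨k, hk⟩ := hx α hα
    exact ⟨-k, by simp [hk]⟩

/-- The star fan of `δ`, as a collection of cones in the quotient by `E`. -/
def starAt {r : ℕ} (F : Set (Set (Vr r))) (δ : Set (Vr r)) (E : Submodule ℝ (Vr r)) :
    Set (Set (Vr r ⧸ E)) :=
  { τ | ∃ σ ∈ F, δ ⊆ σ ∧ τ = E.mkQ '' σ }

/-- The positive roots `R_+^K` at the chamber `K`. -/
def RplusF {r : ℕ} (A : Finset (Set (Vr r))) (R : Finset (Vr r →ₗ[ℝ] ℝ)) (K : Set (Vr r)) :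
    Finset (Vr r →ₗ[ℝ] ℝ) :=
  R.filter (fun α => α ∈ coneGen (BK A R K))

/-- `ρ^K`, the half-sum of the positive roots at `K`. -/
def rhoK {r : ℕ} (A : Finset (Set (Vr r))) (R : Finset (Vr r →ₗ[ℝ] ℝ)) (K : Set (Vr r)) :
    Vr r →ₗ[ℝ] ℝ :=
  (1/2 : ℝ) • ∑ α ∈ RplusF A R K, α

end

/-!
Cones of a fan are closed and convex, and two cones sharing an interior point of one of them
coincide. A point `x` off the codimension-one support `|Σ(r-1)|` lies in the interior of a maximal
cone: near `x` the maximal cones through `x` cover everything outside the spans of the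
lower-dimensional cones, two of them meet in codimension at least two, and a ball stays connected
after removing finitely many subspaces of codimension at least two. Hence the chambers of `A` are
exactly the interiors of the maximal cones, whose closures are the maximal cones themselves. Every
cone is the intersection of the maximal cones containing it, and intersections of cones are cones,
so `Σ` is the set of intersections of closed chambers. It is centrally symmetric because the
arrangement of linear hyperplanes is invariant under `x ↦ -x`.
-/

open Set Metric Module Filter Topology MeasureTheory

section Module

variable {E : Type*} [AddCommGroup E] [Module ℝ E]

theorem sum_smul_mem_coneGen {s : Finset E} {c : E → ℝ} (hc : ∀ v ∈ s, 0 ≤ c v) :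
    ∑ v ∈ s, c v • v ∈ coneGen s :=
  ⟨fun v => max (c v) 0, fun v => le_max_right _ _,
    Finset.sum_congr rfl fun v hv => by simp [max_eq_left (hc v hv)]⟩

theorem zero_mem_coneGen (s : Finset E) : (0 : E) ∈ coneGen s := by
  simpa using sum_smul_mem_coneGen (s := s) (c := 0) fun _ _ => le_rfl

theorem subset_coneGen (s : Finset E) : (s : Set E) ⊆ coneGen s := by
  classical
  intro v hv
  simpa [Finset.sum_ite_eq', Finset.mem_coe.1 hv] using
    sum_smul_mem_coneGen (s := s) (c := fun w => if w = v then 1 else 0)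
      fun w _ => by split_ifs <;> norm_num

theorem coneGen_mono {s t : Finset E} (h : s ⊆ t) : coneGen s ⊆ coneGen t := by
  classical
  rintro x ⟨c, hc, rfl⟩
  have hsum : ∑ v ∈ s, c v • v = ∑ v ∈ t, (if v ∈ s then c v else 0) • v := by
    rw [← Finset.sum_subset h fun v _ hvs => by rw [if_neg hvs, zero_smul]]
    exact Finset.sum_congr rfl fun v hv => by rw [if_pos hv]
  rw [hsum]
  exact sum_smul_mem_coneGen fun v _ => by split_ifs <;> simp [hc]

theorem convex_coneGen (s : Finset E) : Convex ℝ (coneGen s) := by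
  rintro x ⟨c, hc, rfl⟩ y ⟨d, hd, rfl⟩ a b ha hb -
  simp only [Finset.smul_sum, smul_smul, ← Finset.sum_add_distrib, ← add_smul]
  exact sum_smul_mem_coneGen fun v _ => add_nonneg (mul_nonneg ha (hc v)) (mul_nonneg hb (hd v))

theorem IsFaceOf.eq_coneGen_of_sum_mem {τ : Set E} {s : Finset E} (h : IsFaceOf τ (coneGen s))
    (hτ : ∑ v ∈ s, v ∈ τ) : τ = coneGen s := by
  obtain ⟨m, hm, rfl⟩ := h
  have hs : ∀ v ∈ s, m v = 0 := by
    have hsum : ∑ v ∈ s, m v = 0 := by simpa using hτ.2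
    exact (Finset.sum_eq_zero_iff_of_nonneg fun v hv => hm v (subset_coneGen s hv)).1 hsum
  refine inter_eq_self_of_subset_left ?_
  rintro _ ⟨c, -, rfl⟩
  simp only [mem_ofPred_eq, map_sum, map_smul, smul_eq_mul]
  exact Finset.sum_eq_zero fun v hv => by rw [hs v hv, mul_zero]

theorem exists_mem_coneGen_erase {s : Finset E} (hs : ¬LinearIndepOn ℝ id (s : Set E))
    {x : E} (hx : x ∈ coneGen s) : ∃ v ∈ s, x ∈ coneGen (s.erase v) := by
  classical
  obtain ⟨c, hc, rfl⟩ := hx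
  obtain ⟨f, hf, hpos⟩ : ∃ f : E → ℝ, ∑ v ∈ s, f v • v = 0 ∧ ∃ v ∈ s, 0 < f v := by
    obtain ⟨f, hf, v, hv, hfv⟩ := not_linearIndepOn_finset_iff.1 hs
    rcases hfv.lt_or_gt with hneg | hpos
    · exact ⟨-f, by simpa [neg_smul] using hf, v, hv, by simpa using hneg⟩
    · exact ⟨f, by simpa using hf, v, hv, hpos⟩
  obtain ⟨v, hv, hmin⟩ := Finset.exists_min_image (s.filter (0 < f ·)) (fun v => c v / f v)
    (by simpa [Finset.Nonempty] using hpos)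
  rw [Finset.mem_filter] at hv
  -- move along the dependence `f` until the first coefficient vanishes
  set t := c v / f v
  have hc' : ∀ w ∈ s, 0 ≤ c w - t * f w := by
    intro w hw
    rcases le_or_gt (f w) 0 with hfw | hfw
    · nlinarith [hc w, div_nonneg (hc v) hv.2.le]
    · have := hmin w (Finset.mem_filter.2 ⟨hw, hfw⟩)
      rw [le_div_iff₀ hfw] at this
      linarith
  have hcv : c v - t * f v = 0 := by simp [t, div_mul_cancel₀ _ hv.2.ne']
  refine ⟨v, hv.1, ?_⟩
  have hsum : ∑ w ∈ s, c w • w = ∑ w ∈ s.erase v, (c w - t * f w) • w := by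
    rw [Finset.sum_erase s (by rw [hcv, zero_smul])]
    simp only [sub_smul, Finset.sum_sub_distrib, mul_smul, ← Finset.smul_sum, hf, smul_zero,
      sub_zero]
  rw [hsum]
  exact sum_smul_mem_coneGen fun w hw => hc' w (Finset.mem_of_mem_erase hw)

theorem exists_linearIndepOn_subset_mem_coneGen {s : Finset E} {x : E} (hx : x ∈ coneGen s) :
    ∃ t ⊆ s, LinearIndepOn ℝ id (t : Set E) ∧ x ∈ coneGen t := by
  classical
  induction s using Finset.strongInduction with
  | H s ih =>
    by_cases hs : LinearIndepOn ℝ id (s : Set E)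
    · exact ⟨s, subset_rfl, hs, hx⟩
    obtain ⟨v, hv, hxv⟩ := exists_mem_coneGen_erase hs hx
    obtain ⟨t, hts, ht, hxt⟩ := ih _ (Finset.erase_ssubset hv) hxv
    exact ⟨t, hts.trans (s.erase_subset v), ht, hxt⟩

theorem Submodule.notMem_of_mem_segment {W : Submodule ℝ E} {p z w : E} (hp : p ∉ W)
    (hz : z ∉ W ⊔ ℝ ∙ p) (hw : w ∈ segment ℝ p z) : w ∉ W := by
  obtain ⟨a, b, ha, hb, hab, rfl⟩ := hw
  intro hwW
  rcases hb.eq_or_lt with rfl | hb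
  · obtain rfl : a = 1 := by linarith
    exact hp (by simpa using hwW)
  apply hz
  have hzeq : z = b⁻¹ • (a • p + b • z) - (b⁻¹ * a) • p := by
    rw [smul_add, smul_smul, smul_smul, inv_mul_cancel₀ hb.ne', one_smul, add_sub_cancel_left]
  rw [hzeq]
  exact sub_mem (smul_mem _ _ (mem_sup_left hwW))
    (smul_mem _ _ (mem_sup_right (mem_span_singleton_self p)))

end Module

section NormedSpace

variable {E : Type*} [NormedAddCommGroup E] [NormedSpace ℝ E]

theorem isClosed_coneGen_of_linearIndepOn {t : Finset E} (ht : LinearIndepOn ℝ id (t : Set E)) :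
    IsClosed (coneGen t) := by
  classical
  set φ := Fintype.linearCombination ℝ ((↑) : t → E)
  have himage : coneGen t = φ '' Ici 0 := by
    ext x
    constructor
    · rintro ⟨c, hc, rfl⟩
      exact ⟨fun i => c i, fun i => hc i, Finset.sum_coe_sort t fun v => c v • v⟩
    · rintro ⟨g, hg, rfl⟩
      refine ⟨fun v => if h : v ∈ t then g ⟨v, h⟩ else 0, fun v => ?_, ?_⟩
      · dsimp only
        split_ifs
        exacts [hg _, le_rfl]
      · rw [Fintype.linearCombination_apply, ← Finset.sum_coe_sort t]
        exact Finset.sum_congr rfl fun i _ => by simp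
  have hφ : IsClosedEmbedding φ :=
    LinearMap.isClosedEmbedding_of_injective
      (LinearMap.ker_eq_bot.2 ht.fintypeLinearCombination_injective)
  rw [himage]
  exact hφ.isClosedMap _ isClosed_Ici

theorem isClosed_coneGen (s : Finset E) : IsClosed (coneGen s) := by
  classical
  have hunion : coneGen s = ⋃ (t : Finset E)
      (_ : t ∈ s.powerset.filter fun t : Finset E => LinearIndepOn ℝ id (t : Set E)),
      coneGen t := by
    refine Subset.antisymm (fun x hx => ?_) (iUnion₂_subset fun t ht => coneGen_mono ?_)
    · obtain ⟨t, hts, ht, hxt⟩ := exists_linearIndepOn_subset_mem_coneGen hx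
      exact mem_iUnion₂.2 ⟨t, by simpa [hts] using ht, hxt⟩
    · exact Finset.mem_powerset.1 (Finset.mem_filter.1 ht).1
  rw [hunion]
  exact isClosed_biUnion_finset fun t ht =>
    isClosed_coneGen_of_linearIndepOn (Finset.mem_filter.1 ht).2

end NormedSpace

theorem IsPreconnected.subset_of_finite_closed_cover {X : Type*} [TopologicalSpace X]
    {D : Set X} (hD : IsPreconnected D) {𝒞 : Set (Set X)} (h𝒞 : 𝒞.Finite)
    (hclosed : ∀ C ∈ 𝒞, IsClosed C) (hcover : D ⊆ ⋃₀ 𝒞)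
    (hdisj : ∀ C ∈ 𝒞, ∀ C' ∈ 𝒞, C ≠ C' → ∀ z ∈ D, z ∈ C → z ∉ C')
    {C : Set X} (hC : C ∈ 𝒞) (hDC : (D ∩ C).Nonempty) : D ⊆ C := by
  intro z hz
  by_contra hzC
  have hrest : IsClosed (⋃₀ (𝒞 \ {C})) := by
    rw [sUnion_eq_biUnion]
    exact h𝒞.sdiff.isClosed_biUnion fun C' hC' => hclosed C' hC'.1
  have hsplit : D ⊆ C ∪ ⋃₀ (𝒞 \ {C}) := by
    intro w hw
    obtain ⟨C', hC', hwC'⟩ := hcover hw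
    by_cases h : C' = C
    · exact Or.inl (h ▸ hwC')
    · exact Or.inr ⟨C', ⟨hC', h⟩, hwC'⟩
  obtain ⟨w, hwD, hwC, C', ⟨hC', hne⟩, hwC'⟩ :=
    isPreconnected_closed_iff.1 hD C _ (hclosed C hC) hrest hsplit hDC
      ⟨z, hz, (hsplit hz).resolve_left hzC⟩
  exact hdisj C hC C' hC' (Ne.symm hne) w hwD hwC hwC'

section FiniteDimensional

variable {E : Type*} [NormedAddCommGroup E] [NormedSpace ℝ E] [FiniteDimensional ℝ E]

theorem exists_mem_forall_notMem_of_ne_top {U : Set E} (hU : IsOpen U) (hne : U.Nonempty)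
    {𝒮 : Set (Submodule ℝ E)} (h𝒮 : 𝒮.Finite) (htop : ∀ W ∈ 𝒮, W ≠ ⊤) :
    ∃ z ∈ U, ∀ W ∈ 𝒮, z ∉ W := by
  borelize E
  by_contra! h
  have hnull : (Measure.addHaar : Measure E) (⋃ W ∈ 𝒮, (W : Set E)) = 0 :=
    (measure_biUnion_null_iff h𝒮.countable).2 fun W hW =>
      Measure.addHaar_submodule _ W (htop W hW)
  refine (hU.measure_pos _ hne).ne' (measure_mono_null (fun z hz => ?_) hnull)
  obtain ⟨W, hW, hzW⟩ := h z hz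
  exact mem_iUnion₂.2 ⟨W, hW, hzW⟩

theorem LinearMap.eq_zero_of_isLocalMin {m : E →ₗ[ℝ] ℝ} {z : E} (h : IsLocalMin m z) : m = 0 := by
  have := h.hasFDerivAt_eq_zero (LinearMap.toContinuousLinearMap m).hasFDerivAt
  ext v
  simpa using congr($this v)

theorem IsFaceOf.eq_of_mem_interior {τ σ : Set E} (h : IsFaceOf τ σ) {z : E}
    (hzσ : z ∈ interior σ) (hzτ : z ∈ τ) : τ = σ := by
  obtain ⟨m, hm, rfl⟩ := h
  have hmz : m z = 0 := hzτ.2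
  have hmin : IsLocalMin m z :=
    Filter.mem_of_superset (mem_interior_iff_mem_nhds.1 hzσ) fun w hw => by
      simpa [hmz] using hm w hw
  simp [LinearMap.eq_zero_of_isLocalMin hmin]

theorem Convex.interior_nonempty_iff_span_eq_top {s : Set E} (hs : Convex ℝ s) (h0 : (0 : E) ∈ s) :
    (interior s).Nonempty ↔ Submodule.span ℝ s = ⊤ := by
  constructor
  · intro h
    exact (Submodule.span ℝ s).eq_top_of_nonempty_interior'
      (h.mono (interior_mono Submodule.subset_span))
  · intro h
    rw [hs.interior_nonempty_iff_affineSpan_eq_top,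
      AffineSubspace.affineSpan_eq_top_iff_vectorSpan_eq_top_of_nonempty ℝ E E ⟨0, h0⟩,
      ← top_le_iff, ← h, Submodule.span_le]
    intro v hv
    simpa using vsub_mem_vectorSpan ℝ hv h0

theorem Submodule.sup_span_singleton_ne_top {W : Submodule ℝ E}
    (hW : finrank ℝ W + 2 ≤ finrank ℝ E) (p : E) : W ⊔ ℝ ∙ p ≠ ⊤ := by
  intro htop
  have hsup := Submodule.finrank_add_le_finrank_add_finrank W (ℝ ∙ p)
  have hp : finrank ℝ (ℝ ∙ p) ≤ 1 := by simpa using finrank_span_le_card ({p} : Set E)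
  rw [htop, finrank_top] at hsup
  omega

/-- Two points are joined through a generic third point of the ball. -/
theorem isPreconnected_ball_diff_biUnion (x : E) (ε : ℝ) {𝒮 : Set (Submodule ℝ E)}
    (h𝒮 : 𝒮.Finite) (hdim : ∀ W ∈ 𝒮, finrank ℝ W + 2 ≤ finrank ℝ E) :
    IsPreconnected (ball x ε \ ⋃ W ∈ 𝒮, (W : Set E)) := by
  set D := ball x ε \ ⋃ W ∈ 𝒮, (W : Set E)
  have hseg : ∀ p ∈ D, ∀ z ∈ ball x ε, (∀ W ∈ 𝒮, z ∉ W ⊔ ℝ ∙ p) → segment ℝ p z ⊆ D := by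
    intro p hp z hz hzp w hw
    refine ⟨(convex_ball x ε).segment_subset hp.1 hz hw, ?_⟩
    simp only [mem_iUnion₂, not_exists]
    intro W hW
    exact Submodule.notMem_of_mem_segment (fun h => hp.2 (mem_iUnion₂.2 ⟨W, hW, h⟩)) (hzp W hW) hw
  refine isPreconnected_of_forall_pair fun p hp q hq => ?_
  obtain ⟨z, hz, hzgen⟩ := exists_mem_forall_notMem_of_ne_top isOpen_ball ⟨p, hp.1⟩
    ((h𝒮.image (· ⊔ ℝ ∙ p)).union (h𝒮.image (· ⊔ ℝ ∙ q)))
    (by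
      rintro _ (⟨W, hW, rfl⟩ | ⟨W, hW, rfl⟩) <;>
      exact Submodule.sup_span_singleton_ne_top (hdim W hW) _)
  refine ⟨segment ℝ p z ∪ segment ℝ z q,
    union_subset (hseg p hp z hz fun W hW => hzgen _ (Or.inl ⟨W, hW, rfl⟩))
      (segment_symm ℝ q z ▸ hseg q hq z hz fun W hW => hzgen _ (Or.inr ⟨W, hW, rfl⟩)),
    Or.inl (left_mem_segment ℝ p z), Or.inr (right_mem_segment ℝ z q), ?_⟩
  exact (convex_segment p z).isPreconnected.union z (right_mem_segment ℝ p z)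
    (left_mem_segment ℝ z q) (convex_segment z q).isPreconnected

end FiniteDimensional

section Fan

variable {r : ℕ}

/-- The support `|Σ(r-1)|` of the codimension-one cones of a fan. -/
def codimOneSupport (F : Set (Set (Vr r))) : Set (Vr r) := ⋃₀ {τ ∈ F | spanDim τ = r - 1}

/-- The cones with nonempty interior; in a complete fan these are the maximal cones. -/
def fullCones (F : Set (Set (Vr r))) : Set (Set (Vr r)) := {γ ∈ F | (interior γ).Nonempty}

theorem spanDim_eq_iff_span_eq_top {σ : Set (Vr r)} : spanDim σ = r ↔ Submodule.span ℝ σ = ⊤ := by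
  have hr : finrank ℝ (Vr r) = r := finrank_fin_fun ℝ
  refine ⟨fun h => Submodule.eq_top_of_finrank_eq (h.trans hr.symm), fun h => ?_⟩
  rw [spanDim, h, finrank_top, hr]

theorem spanDim_le (σ : Set (Vr r)) : spanDim σ ≤ r :=
  (Submodule.finrank_le _).trans_eq (finrank_fin_fun ℝ)

namespace IsFan

variable {N : AddSubgroup (Vr r)} {F : Set (Set (Vr r))} {σ τ γ : Set (Vr r)}

theorem isClosed (hF : IsFan N F) (hσ : σ ∈ F) : IsClosed σ := by
  obtain ⟨s, -, rfl, -⟩ := hF.cones σ hσ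
  exact isClosed_coneGen s

theorem convex (hF : IsFan N F) (hσ : σ ∈ F) : Convex ℝ σ := by
  obtain ⟨s, -, rfl, -⟩ := hF.cones σ hσ
  exact convex_coneGen s

theorem zero_mem (hF : IsFan N F) (hσ : σ ∈ F) : (0 : Vr r) ∈ σ := by
  obtain ⟨s, -, rfl, -⟩ := hF.cones σ hσ
  exact zero_mem_coneGen s

theorem isClosed_sUnion (hF : IsFan N F) {𝒞 : Set (Set (Vr r))} (h𝒞 : 𝒞 ⊆ F) :
    IsClosed (⋃₀ 𝒞) := by
  rw [sUnion_eq_biUnion]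
  exact (hF.finite.subset h𝒞).isClosed_biUnion fun σ hσ => hF.isClosed (h𝒞 hσ)

theorem interior_nonempty_iff (hF : IsFan N F) (hσ : σ ∈ F) :
    (interior σ).Nonempty ↔ spanDim σ = r := by
  rw [spanDim_eq_iff_span_eq_top]
  exact (hF.convex hσ).interior_nonempty_iff_span_eq_top (hF.zero_mem hσ)

theorem closure_interior (hF : IsFan N F) (hσ : σ ∈ F) (hne : (interior σ).Nonempty) :
    closure (interior σ) = σ := by
  rw [(hF.convex hσ).closure_interior_eq_closure_of_nonempty_interior hne,
    (hF.isClosed hσ).closure_eq]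

theorem eq_of_mem_interior (hF : IsFan N F) (hσ : σ ∈ F) (hτ : τ ∈ F) {z : Vr r}
    (hzσ : z ∈ interior σ) (hzτ : z ∈ τ) : σ = τ := by
  have hσsub : σ ⊆ τ := by
    have := (hF.inter σ hσ τ hτ).1.eq_of_mem_interior hzσ ⟨interior_subset hzσ, hzτ⟩
    exact this ▸ inter_subset_right
  have hface := (hF.inter σ hσ τ hτ).2
  rw [inter_eq_self_of_subset_left hσsub] at hface
  exact hface.eq_of_mem_interior (interior_mono hσsub hzσ) (interior_subset hzσ)

theorem sInter_mem (hF : IsFan N F) {𝒞 : Set (Set (Vr r))} (hne : 𝒞.Nonempty) (h𝒞 : 𝒞 ⊆ F) :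
    ⋂₀ 𝒞 ∈ F := by
  induction 𝒞, hF.finite.subset h𝒞 using Set.Finite.induction_on with
  | empty => exact absurd hne not_nonempty_empty
  | @insert σ 𝒞 _ _ ih =>
    rw [sInter_insert]
    have hσ : σ ∈ F := h𝒞 (mem_insert σ 𝒞)
    rcases 𝒞.eq_empty_or_nonempty with rfl | h𝒞ne
    · simpa using hσ
    have hrest := ih h𝒞ne ((subset_insert σ 𝒞).trans h𝒞)
    exact hF.faces σ hσ _ (hF.inter σ hσ _ hrest).1

theorem eventually_mem_imp_mem (hF : IsFan N F) (x : Vr r) :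
    ∀ᶠ z in 𝓝 x, ∀ σ ∈ F, z ∈ σ → x ∈ σ := by
  have hclosed := hF.isClosed_sUnion (sep_subset F fun σ => x ∉ σ)
  filter_upwards [hclosed.isOpen_compl.mem_nhds fun ⟨σ, hσ, hxσ⟩ => hσ.2 hxσ] with z hz σ hσ hzσ
  by_contra hxσ
  exact hz ⟨σ, ⟨hσ, hxσ⟩, hzσ⟩

/-- What the full-dimensional cones through `x` leave uncovered near `x` lies in the spans of the
lower-dimensional cones, which cover no open set. -/
theorem eventually_exists_fullCones (hF : IsFan N F) (hcomp : FanComplete F) (x : Vr r) :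
    ∀ᶠ z in 𝓝 x, ∃ γ ∈ fullCones F, x ∈ γ ∧ z ∈ γ := by
  obtain ⟨U, hU, hUopen, hxU⟩ := _root_.mem_nhds_iff.1 (hF.eventually_mem_imp_mem x)
  suffices U ⊆ ⋃₀ {γ ∈ fullCones F | x ∈ γ} by
    filter_upwards [hUopen.mem_nhds hxU] with z hz
    obtain ⟨γ, ⟨hγ, hxγ⟩, hzγ⟩ := this hz
    exact ⟨γ, hγ, hxγ, hzγ⟩
  intro z hz
  by_contra hzfull
  obtain ⟨w, ⟨hwU, hwfull⟩, hwgen⟩ := exists_mem_forall_notMem_of_ne_top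
    (hUopen.sdiff (hF.isClosed_sUnion fun γ hγ => hγ.1.1)) ⟨z, hz, hzfull⟩
    ((hF.finite.sep fun σ => ¬(interior σ).Nonempty).image (Submodule.span ℝ))
    (by
      rintro _ ⟨σ, ⟨hσ, hint⟩, rfl⟩ htop
      exact hint ((hF.interior_nonempty_iff hσ).2 (spanDim_eq_iff_span_eq_top.2 htop)))
  obtain ⟨σ, hσ, hwσ⟩ := sUnion_eq_univ_iff.1 hcomp w
  by_cases hint : (interior σ).Nonempty
  · exact hwfull ⟨σ, ⟨⟨hσ, hint⟩, hU hwU σ hσ hwσ⟩, hwσ⟩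
  · exact hwgen _ ⟨σ, ⟨hσ, hint⟩, rfl⟩ (Submodule.subset_span hwσ)

theorem spanDim_inter_add_two_le (hF : IsFan N F) {x : Vr r} (hx : x ∉ codimOneSupport F)
    (hγ : γ ∈ F) (hτ : τ ∈ F) (hne : γ ≠ τ) (hxγ : x ∈ γ) (hxτ : x ∈ τ) :
    spanDim (γ ∩ τ) + 2 ≤ r := by
  have hδ : γ ∩ τ ∈ F := hF.faces γ hγ _ (hF.inter γ hγ τ hτ).1
  have hfull : spanDim (γ ∩ τ) ≠ r := fun h => by
    obtain ⟨w, hw⟩ := (hF.interior_nonempty_iff hδ).2 h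
    exact hne ((hF.eq_of_mem_interior hδ hγ hw (interior_subset hw).1).symm.trans
      (hF.eq_of_mem_interior hδ hτ hw (interior_subset hw).2))
  have hcodim : spanDim (γ ∩ τ) ≠ r - 1 := fun h => hx ⟨_, ⟨hδ, h⟩, hxγ, hxτ⟩
  have := spanDim_le (γ ∩ τ)
  omega

/-- Off the codimension-one support, the full-dimensional cones through `x` cover a ball around `x`
and meet each other only in subspaces of codimension at least two, whose complement in the ball is
connected; so a single one of them contains the ball. -/
theorem exists_mem_interior (hF : IsFan N F) (hcomp : FanComplete F) {x : Vr r}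
    (hx : x ∉ codimOneSupport F) : ∃ γ ∈ F, x ∈ interior γ := by
  obtain ⟨ε, hε, hball⟩ :=
    Metric.eventually_nhds_iff_ball.1 (hF.eventually_exists_fullCones hcomp x)
  set 𝒮 := Submodule.span ℝ '' {δ ∈ F | x ∈ δ ∧ spanDim δ + 2 ≤ r}
  have h𝒮 : 𝒮.Finite := (hF.finite.sep _).image _
  have hdim : ∀ W ∈ 𝒮, finrank ℝ W + 2 ≤ finrank ℝ (Vr r) := by
    rintro _ ⟨δ, ⟨-, -, hδ⟩, rfl⟩
    simpa [spanDim] using hδ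
  have htop : ∀ W ∈ 𝒮, W ≠ ⊤ := fun W hW h => by
    have := hdim W hW
    rw [h, finrank_top] at this
    omega
  set D := ball x ε \ ⋃ W ∈ 𝒮, (W : Set (Vr r))
  have hmemD : ∀ z ∈ ball x ε, (∀ W ∈ 𝒮, z ∉ W) → z ∈ D := fun z hz hzgen =>
    ⟨hz, fun h => by
      obtain ⟨W, hW, hzW⟩ := mem_iUnion₂.1 h
      exact hzgen W hW hzW⟩
  obtain ⟨z₀, hz₀, hz₀gen⟩ :=
    exists_mem_forall_notMem_of_ne_top isOpen_ball ⟨x, mem_ball_self hε⟩ h𝒮 htop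
  obtain ⟨γ₀, hγ₀, hxγ₀, hz₀γ₀⟩ := hball z₀ hz₀
  have hDγ₀ : D ⊆ γ₀ := by
    refine (isPreconnected_ball_diff_biUnion x ε h𝒮 hdim).subset_of_finite_closed_cover
      (𝒞 := {γ ∈ fullCones F | x ∈ γ}) (hF.finite.subset fun γ hγ => hγ.1.1)
      (fun γ hγ => hF.isClosed hγ.1.1) (fun z hz => ?_) ?_ ⟨hγ₀, hxγ₀⟩
      ⟨z₀, hmemD z₀ hz₀ hz₀gen, hz₀γ₀⟩
    · obtain ⟨γ, hγ, hxγ, hzγ⟩ := hball z hz.1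
      exact ⟨γ, ⟨hγ, hxγ⟩, hzγ⟩
    · rintro γ ⟨hγ, hxγ⟩ τ ⟨hτ, hxτ⟩ hne z hz hzγ hzτ
      have hδ := hF.spanDim_inter_add_two_le hx hγ.1 hτ.1 hne hxγ hxτ
      exact hz.2 (mem_iUnion₂.2 ⟨_, ⟨γ ∩ τ, ⟨hF.faces γ hγ.1 _ (hF.inter γ hγ.1 τ hτ.1).1,
        ⟨hxγ, hxτ⟩, hδ⟩, rfl⟩, Submodule.subset_span ⟨hzγ, hzτ⟩⟩)
  have hballγ₀ : ball x ε ⊆ γ₀ := by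
    by_contra hsub
    obtain ⟨w, hw, hwγ₀⟩ := not_subset.1 hsub
    obtain ⟨z, ⟨hz, hzγ₀⟩, hzgen⟩ := exists_mem_forall_notMem_of_ne_top
      (isOpen_ball.sdiff (hF.isClosed hγ₀.1)) ⟨w, hw, hwγ₀⟩ h𝒮 htop
    exact hzγ₀ (hDγ₀ (hmemD z hz hzgen))
  exact ⟨γ₀, hγ₀.1, mem_interior.2 ⟨ball x ε, hballγ₀, isOpen_ball, mem_ball_self hε⟩⟩

theorem interior_subset_compl_codimOneSupport (hF : IsFan N F) (hr : 0 < r) (hσ : σ ∈ F) :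
    interior σ ⊆ (codimOneSupport F)ᶜ := by
  rintro z hz ⟨τ, ⟨hτ, hτdim⟩, hzτ⟩
  obtain rfl := hF.eq_of_mem_interior hσ hτ hz hzτ
  have := (hF.interior_nonempty_iff hσ).1 ⟨z, hz⟩
  omega

theorem connectedComponentIn_eq_interior (hF : IsFan N F) (hcomp : FanComplete F) (hr : 0 < r)
    (hγ : γ ∈ F) {x : Vr r} (hx : x ∈ interior γ) :
    connectedComponentIn (codimOneSupport F)ᶜ x = interior γ := by
  set U := (codimOneSupport F)ᶜ
  have hγU : interior γ ⊆ U := hF.interior_subset_compl_codimOneSupport hr hγ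
  have hUγ : U ∩ γ ⊆ interior γ := by
    rintro z ⟨hzU, hzγ⟩
    obtain ⟨γ', hγ', hz'⟩ := hF.exists_mem_interior hcomp hzU
    rwa [hF.eq_of_mem_interior hγ' hγ hz' hzγ] at hz'
  have hUopen : IsOpen U := (hF.isClosed_sUnion (sep_subset _ _)).isOpen_compl
  refine Subset.antisymm ?_
    ((hF.convex hγ).interior.isPreconnected.subset_connectedComponentIn hx hγU)
  refine isPreconnected_connectedComponentIn.subset_left_of_subset_union isOpen_interior
    (hUopen.sdiff (hF.isClosed hγ)) (disjoint_sdiff_right.mono_left interior_subset)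
    (fun w hw => ?_) ⟨x, mem_connectedComponentIn (hγU hx), hx⟩
  have hwU := connectedComponentIn_subset U x hw
  by_cases hwγ : w ∈ γ
  · exact Or.inl (hUγ ⟨hwU, hwγ⟩)
  · exact Or.inr ⟨hwU, hwγ⟩

theorem chambers_eq (hF : IsFan N F) (hcomp : FanComplete F) (hr : 0 < r)
    {A : Finset (Set (Vr r))} (hsupp : codimOneSupport F = ⋃₀ (A : Set (Set (Vr r)))) :
    chambers A = interior '' fullCones F := by
  ext K
  simp only [chambers, ← hsupp]
  constructor
  · rintro ⟨x, hx, rfl⟩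
    obtain ⟨γ, hγ, hxγ⟩ := hF.exists_mem_interior hcomp hx
    exact ⟨γ, ⟨hγ, x, hxγ⟩, (hF.connectedComponentIn_eq_interior hcomp hr hγ hxγ).symm⟩
  · rintro ⟨γ, ⟨hγ, x, hx⟩, rfl⟩
    exact ⟨x, hF.interior_subset_compl_codimOneSupport hr hγ hx,
      (hF.connectedComponentIn_eq_interior hcomp hr hγ hx).symm⟩

/-- The sum `y` of the generators lies in no proper face, so every cone through a point near `y`
contains the whole cone; and for `w` in all the maximal cones containing it, the points `y - t • w`
force the defining functional of the face to vanish at `w`. -/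
theorem sInter_fullCones (hF : IsFan N F) (hcomp : FanComplete F) (hσ : σ ∈ F) :
    {γ ∈ fullCones F | σ ⊆ γ}.Nonempty ∧ ⋂₀ {γ ∈ fullCones F | σ ⊆ γ} = σ := by
  obtain ⟨s, -, rfl, -⟩ := hF.cones σ hσ
  set y := ∑ v ∈ s, v
  have hy : y ∈ coneGen s := by
    simpa using sum_smul_mem_coneGen (s := s) (c := 1) fun _ _ => zero_le_one
  have hsub : ∀ γ ∈ F, y ∈ γ → coneGen s ⊆ γ := fun γ hγ hyγ => by
    rw [← (hF.inter _ hσ γ hγ).1.eq_coneGen_of_sum_mem ⟨hy, hyγ⟩]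
    exact inter_subset_right
  have hnear := hF.eventually_exists_fullCones hcomp y
  refine ⟨?_, Subset.antisymm (fun w hw => ?_) fun w hw => mem_sInter.2 fun γ hγ => hγ.2 hw⟩
  · obtain ⟨γ, hγ, hyγ, -⟩ := hnear.self_of_nhds
    exact ⟨γ, hγ, hsub γ hγ.1 hyγ⟩
  have hlim : Tendsto (fun t : ℝ => y - t • w) (𝓝[>] 0) (𝓝 y) := by
    have : Continuous fun t : ℝ => y - t • w := by fun_prop
    simpa using (this.tendsto 0).mono_left nhdsWithin_le_nhds
  obtain ⟨t, ⟨γ, hγ, hyγ, hγt⟩, ht⟩ := ((hlim.eventually hnear).and self_mem_nhdsWithin).exists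
  have hsγ := hsub γ hγ.1 hyγ
  have hwγ : w ∈ γ := mem_sInter.1 hw γ ⟨hγ, hsγ⟩
  obtain ⟨m, hm, hmeq⟩ := inter_eq_left.2 hsγ ▸ (hF.inter _ hσ γ hγ.1).2
  have hmy : m y = 0 := (hmeq ▸ hy : y ∈ γ ∩ {x | m x = 0}).2
  have hmt := hm _ hγt
  rw [map_sub, map_smul, hmy, smul_eq_mul] at hmt
  have hmw := hm w hwγ
  have ht : (0 : ℝ) < t := ht
  rw [hmeq]
  exact ⟨hwγ, le_antisymm (by nlinarith) hmw⟩

theorem closure_image_interior (hF : IsFan N F) {𝒞 : Set (Set (Vr r))} (h𝒞 : 𝒞 ⊆ fullCones F) :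
    closure '' (interior '' 𝒞) = 𝒞 := by
  rw [← image_comp]
  exact (image_congr fun γ hγ => hF.closure_interior (h𝒞 hγ).1 (h𝒞 hγ).2).trans (image_id' 𝒞)

theorem eq_closedChamberInts (hF : IsFan N F) (hcomp : FanComplete F) (hr : 0 < r)
    {A : Finset (Set (Vr r))} (hsupp : codimOneSupport F = ⋃₀ (A : Set (Set (Vr r)))) :
    F = closedChamberInts A := by
  rw [closedChamberInts, hF.chambers_eq hcomp hr hsupp]
  ext σ
  constructor
  · intro hσ
    obtain ⟨hne, heq⟩ := hF.sInter_fullCones hcomp hσ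
    refine ⟨interior '' {γ ∈ fullCones F | σ ⊆ γ}, hne.image _, image_mono (sep_subset _ _), ?_⟩
    rw [hF.closure_image_interior (sep_subset _ _), heq]
  · rintro ⟨S, hSne, hS, rfl⟩
    have hSF : closure '' S ⊆ F := by
      refine (image_mono hS).trans ?_
      rw [hF.closure_image_interior subset_rfl]
      exact sep_subset _ _
    exact hF.sInter_mem (hSne.image _) hSF

theorem pos_of_codimOneSupport_eq (hF : IsFan N F) {A : Finset (Set (Vr r))}
    (hA : ∀ H ∈ A, IsHyp H) (hsupp : codimOneSupport F = ⋃₀ (A : Set (Set (Vr r)))) : 0 < r := by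
  obtain ⟨σ, hσ⟩ := hF.nonempty
  by_contra! hr
  obtain rfl : r = 0 := by omega
  have h0 : (0 : Vr 0) ∈ codimOneSupport F :=
    ⟨σ, ⟨hσ, by simpa using spanDim_le σ⟩, hF.zero_mem hσ⟩
  obtain ⟨H, hH, -⟩ := hsupp ▸ h0
  obtain ⟨f, hf, -⟩ := hA H hH
  exact hf (Subsingleton.elim f 0)

end IsFan

theorem neg_mem_chambers {A : Finset (Set (Vr r))} (hA : ∀ H ∈ A, IsHyp H) {K : Set (Vr r)}
    (hK : K ∈ chambers A) : -K ∈ chambers A := by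
  have hU : -(⋃₀ (A : Set (Set (Vr r))))ᶜ = (⋃₀ (A : Set (Set (Vr r))))ᶜ := by
    ext z
    simp only [Set.mem_neg, mem_compl_iff, mem_sUnion]
    refine not_congr (exists_congr fun H => and_congr_right fun hH => ?_)
    obtain ⟨f, -, rfl⟩ := hA H hH
    simp
  obtain ⟨x, hx, rfl⟩ := hK
  have himage := (Homeomorph.neg (Vr r)).image_connectedComponentIn hx
  simp only [Homeomorph.coe_neg, image_neg_eq_neg, hU] at himage
  refine ⟨-x, ?_, himage⟩
  rw [← hU]
  simpa using hx

theorem cSymm_closedChamberInts {A : Finset (Set (Vr r))} (hA : ∀ H ∈ A, IsHyp H) :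
    CSymm (closedChamberInts A) := by
  rintro _ ⟨S, hSne, hS, rfl⟩
  refine ⟨Neg.neg '' S, hSne.image _, ?_, ?_⟩
  · rintro _ ⟨K, hK, rfl⟩
    exact neg_mem_chambers hA (hS hK)
  · ext z
    simp [neg_closure]

end Fan

theorem stmt4_general {r : ℕ} (N : AddSubgroup (Vr r)) (F : Set (Set (Vr r)))
    (hfan : IsFan N F) (hcomp : FanComplete F)
    (A : Finset (Set (Vr r))) (hA : ∀ H ∈ A, IsHyp H)
    (hsupp : ⋃₀ {τ ∈ F | spanDim τ = r - 1} = ⋃₀ (A : Set (Set (Vr r)))) :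
    F = closedChamberInts A ∧ CSymm F := by
  have hF := hfan.eq_closedChamberInts hcomp (hfan.pos_of_codimOneSupport_eq hA hsupp) hsupp
  exact ⟨hF, hF ▸ cSymm_closedChamberInts hA⟩

/-- a strongly symmetric fan equals the set of all intersections of
closed chambers of its arrangement of hyperplanes, and is centrally symmetric. -/
theorem stmt4 {r : ℕ} (N : AddSubgroup (Vr r)) (F : Set (Set (Vr r)))
    (hN : IsLattice N) (hfan : IsFan N F) (hcomp : FanComplete F)
    (A : Finset (Set (Vr r))) (hA : ∀ H ∈ A, IsHyp H)
    (hsupp : ⋃₀ {τ ∈ F | spanDim τ = r - 1} = ⋃₀ (A : Set (Set (Vr r)))) :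
    F = closedChamberInts A ∧ CSymm F :=
  stmt4_general N F hfan hcomp A hA hsupp
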